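/- Let W' be a generalized rank two parabolic subgroup of W with canonical generators r₁, r₂, and order its reflections as u₁ = r₁, u₂ = r₁r₂r₁, …, u_m = r₂ (alternating words). Then: if ω_c(β_{u₁}, β_{u_m}) = 0 then ω_c(β_{u_i}, β_{u_j}) = 0 for all i, j; if ω_c(β_{u₁}, β_{u_m}) < 0 then ω_c(β_{u_i}, β_{u_j}) < 0 for all i < j; and if ω_c(β_{u₁}, β_{u_m}) > 0 then ω_c(β_{u_i}, β_{u_j}) > 0 for all i < j. -/

import Mathlib

/-- A geometric (reflection) representation of the Coxeter system `cs`, arising from a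
symmetrizable generalized Cartan matrix `a` with symmetrizing function `δ`.  The field `α`
records the simple roots (a basis of `V`), `ρ` is the reflection representation, and `β`
assigns to each reflection `t = w sᵢ w⁻¹` its positive root (the member of `±(w · αᵢ)` lying
in the nonnegative span of the simple roots). -/
structure CoxeterGeomRep {B W : Type*} [Group W] (M : CoxeterMatrix B)
    (cs : CoxeterSystem M W) (V : Type*) [AddCommGroup V] [Module ℝ V] where
  /-- the generalized Cartan matrix -/
  a : B → B → ℝ
  /-- the symmetrizing function -/
  δ : B → ℝ
  δ_pos : ∀ i, 0 < δ i
  symmetrize : ∀ i j, δ i * a i j = δ j * a j i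
  δ_conj : ∀ i j, IsConj (cs.simple i) (cs.simple j) → δ i = δ j
  a_diag : ∀ i, a i i = 2
  a_offdiag : ∀ i j, i ≠ j → a i j ≤ 0
  a_fin : ∀ i j, i ≠ j → M i j ≠ 0 →
    a i j * a j i = 4 * Real.cos (Real.pi / (M i j : ℝ)) ^ 2
  a_inf : ∀ i j, M i j = 0 → 4 ≤ a i j * a j i
  a_zero : ∀ i j, a i j = 0 ↔ a j i = 0
  /-- the simple roots, a basis of `V` -/
  α : Module.Basis B ℝ V
  /-- the reflection representation of `W` on `V` -/
  ρ : W →* (V ≃ₗ[ℝ] V)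
  act : ∀ i j, ρ (cs.simple i) (α j) = α j - a i j • α i
  /-- the positive root associated to each reflection -/
  β : W → V
  β_root : ∀ (w : W) (i : B),
    β (w * cs.simple i * w⁻¹) = ρ w (α i) ∨ β (w * cs.simple i * w⁻¹) = -(ρ w (α i))
  β_pos : ∀ t, cs.IsReflection t →
    ∃ c : B →₀ ℝ, (∀ i, 0 ≤ c i) ∧ β t = c.sum fun i r => r • α i

/-- `v` lies in the nonnegative linear span (the cone generated by) the set `X`. -/
def InCone {V : Type*} [AddCommGroup V] [Module ℝ V] (X : Set V) (v : V) : Prop :=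
  ∃ (n : ℕ) (x : Fin n → V) (c : Fin n → ℝ),
    (∀ k, x k ∈ X) ∧ (∀ k, 0 ≤ c k) ∧ v = ∑ k, c k • x k

/-- `R` is the set of canonical generators of the reflection subgroup `W'`:  every positive
root of a reflection of `W'` lies in the nonnegative span of `{β_r : r ∈ R}`, and no `β_r`
lies in the nonnegative span of the positive roots of the other reflections of `W'`. -/
def IsCanonicalGenerators {B W V : Type*} [Group W] [AddCommGroup V] [Module ℝ V]
    {M : CoxeterMatrix B} (cs : CoxeterSystem M W) (g : CoxeterGeomRep M cs V)
    (W' : Subgroup W) (R : Set W) : Prop :=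
  R ⊆ {t | t ∈ W' ∧ cs.IsReflection t} ∧
  (∀ t ∈ W', cs.IsReflection t → InCone (g.β '' R) (g.β t)) ∧
  ∀ r ∈ R, ¬ InCone (g.β '' ({t | t ∈ W' ∧ cs.IsReflection t} \ {r})) (g.β r)
/-- `F` is the Euler form `E_c` for the Coxeter element `c` given by the reduced word `l`
(an enumeration of the simple generators):  on simple coroots and simple roots it is given
by `E_c(α^∨_{s_i}, α_{s_j}) = a_{s_i s_j}` if `i > j`, `1` if `i = j`, `0` if `i < j`. -/
def IsEulerForm {B W V : Type*} [Group W] [AddCommGroup V] [Module ℝ V]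
    {M : CoxeterMatrix B} (cs : CoxeterSystem M W) (g : CoxeterGeomRep M cs V)
    (l : List B) (F : V →ₗ[ℝ] V →ₗ[ℝ] ℝ) : Prop :=
  ∀ i j : Fin l.length,
    F ((g.δ (l.get i))⁻¹ • g.α (l.get i)) (g.α (l.get j)) =
      if (j : ℕ) < (i : ℕ) then g.a (l.get i) (l.get j)
      else if (i : ℕ) = (j : ℕ) then 1 else 0

/-- The reflections `u₁, u₂, …, u_m` of the dihedral reflection subgroup generated by
`r₁, r₂`: `inl i` denotes `u_{i+1} = (r₁r₂)^i r₁` (counted from `r₁`) and `inr k` denotes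
`u_{m-k} = (r₂r₁)^k r₂` (counted from `r₂`). -/
def dihedralRefl {W : Type*} [Group W] (r₁ r₂ : W) : ℕ ⊕ ℕ → W
  | .inl i => (r₁ * r₂) ^ i * r₁
  | .inr k => (r₂ * r₁) ^ k * r₂

/-- The index `x` is a valid index for a reflection of the dihedral group in which `r₁ r₂`
has order `m` (with `m = 0` encoding infinite order). -/
def DihedralIdx (m : ℕ) : ℕ ⊕ ℕ → Prop
  | .inl i => m = 0 ∨ i < m
  | .inr k => m = 0 ∨ k < m

/-- `x` strictly precedes `y` in the canonical ordering `u₁, u₂, …, u_m` of the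
reflections of the dihedral group in which `r₁ r₂` has order `m` (`m = 0` encoding
`m = ∞`); `inl i` sits in position `i + 1` and `inr k` in position `m - k`. -/
def DihedralBefore (m : ℕ) : ℕ ⊕ ℕ → ℕ ⊕ ℕ → Prop
  | .inl i, .inl j => i < j ∧ (m = 0 ∨ j < m)
  | .inl i, .inr k => m = 0 ∨ (k < m ∧ i + 1 < m - k)
  | .inr k, .inl i => m ≠ 0 ∧ k < m ∧ i < m ∧ m - k < i + 1
  | .inr k, .inr k' => k' < k ∧ (m = 0 ∨ k < m)

/-!
The roots of the reflections of `W'` lie in the cone spanned by `β r₁, β r₂`, and on this plane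
`F u v - F v u` is `ω_c(β r₁, β r₂)` times the determinant in the basis `β r₁, β r₂`; so it
suffices to show that `β_{u_i}, β_{u_j}` have positive determinant for `i < j`.

Rescaling `β r₂` by some `κ > 0` makes `ρ r₁, ρ r₂` act on the plane through a symmetric Cartan
matrix `[[2, -s], [-s, 2]]`. The root of `(r₁ r₂)ⁿ r₁` (`n ∈ ℤ`) is then a multiple of
`S_n(s) β r₁ + S_{n-1}(s) κ β r₂`, with `S` the rescaled Chebyshev polynomials, and the
determinant of the vectors of indices `a, b` is `S_{b-a-1}(s)`. By induction, `S_e(s) > 0`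
whenever `e + 1` is less than the order of `r₁ r₂`: at the first failure the root of
`(r₁ r₂)^e r₁` is proportional to `β r₂`, and canonicity forces `(r₁ r₂)^e r₁ = r₂`. Positivity
of roots then fixes the signs of the multiples.
-/

namespace Polynomial.Chebyshev

variable (R : Type*) [CommRing R]

theorem S_mul_S_sub_S_mul_S (a b : ℤ) :
    S R a * S R (b - 1) - S R (a - 1) * S R b = S R (b - a - 1) := by
  induction a using Int.induction_on generalizing b with
  | zero => simp
  | succ a ih =>
    have h := ih (b - 1)
    rw [show b - 1 - 1 = b - 2 by ring, show b - 1 - a - 1 = b - (a + 1) - 1 by ring] at h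
    rw [S_add_one, S_eq R b, add_sub_cancel_right]
    linear_combination h
  | pred a ih =>
    have h := ih (b + 1)
    rw [show b + 1 - 1 = b by ring, show b + 1 - -(a : ℤ) - 1 = b - (-a - 1) - 1 by ring] at h
    have e := S_sub_one R (-a - 1)
    rw [show -(a : ℤ) - 1 + 1 = -a by ring] at e
    rw [S_add_one R b] at h
    rw [e]
    linear_combination h

end Polynomial.Chebyshev

open Polynomial.Chebyshev

lemma exists_pos_sq_mul_eq {x y : ℝ} (hx : 0 ≤ x) (hy : 0 ≤ y) (h : x = 0 ↔ y = 0) :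
    ∃ κ : ℝ, 0 < κ ∧ κ ^ 2 * x = y := by
  rcases hx.eq_or_lt with rfl | hx
  · exact ⟨1, one_pos, by simp [h.mp rfl]⟩
  · have hy : 0 < y / x := div_pos (lt_of_le_of_ne hy (Ne.symm (mt h.mpr hx.ne'))) hx
    exact ⟨√(y / x), Real.sqrt_pos.mpr hy, by
      rw [Real.sq_sqrt hy.le, div_mul_cancel₀ _ hx.ne']⟩

lemma Int.exists_eq_add_two_mul (n : ℤ) : ∃ n₀ j : ℤ, (n₀ = 0 ∨ n₀ = -1) ∧ n = n₀ + 2 * j := by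
  obtain ⟨j, rfl | rfl⟩ := Int.even_or_odd' n
  · exact ⟨0, j, Or.inl rfl, by ring⟩
  · exact ⟨-1, j + 1, Or.inr rfl, by ring⟩

def dihedralIndex (m : ℕ) : ℕ ⊕ ℕ → ℤ
  | .inl i => i
  | .inr k => m - k - 1

section InvolutionPair

variable {G : Type*} [Group G] {a b : G}

lemma mul_inv_of_inv_eq (ha : a⁻¹ = a) (hb : b⁻¹ = b) : (a * b)⁻¹ = b * a := by
  rw [mul_inv_rev, ha, hb]

lemma conj_zpow_mul_of_inv_eq (ha : a⁻¹ = a) (hb : b⁻¹ = b) (k : ℤ) :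
    a * (a * b) ^ k * a⁻¹ = (a * b) ^ (-k) := by
  rw [← conj_zpow, zpow_neg, ← inv_zpow, mul_inv_of_inv_eq ha hb, ← mul_assoc,
    mul_eq_one_iff_eq_inv.mpr ha.symm, one_mul, ha]

lemma zpow_add_two_mul_mul (ha : a⁻¹ = a) (hb : b⁻¹ = b) (n j : ℤ) :
    (a * b) ^ (n + 2 * j) * a = (a * b) ^ j * ((a * b) ^ n * a) * ((a * b) ^ j)⁻¹ := by
  have h := conj_zpow_mul_of_inv_eq ha hb (-j)
  rw [neg_neg, mul_inv_eq_iff_eq_mul] at h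
  rw [← zpow_neg, mul_assoc, mul_assoc, h, ← mul_assoc, ← mul_assoc, ← zpow_add, ← zpow_add]
  ring_nf

lemma zpow_neg_one_mul_of_inv_eq (ha : a⁻¹ = a) (hb : b⁻¹ = b) :
    (a * b) ^ (-1 : ℤ) * a = b := by
  rw [zpow_neg_one, mul_inv_of_inv_eq ha hb, mul_assoc, mul_eq_one_iff_eq_inv.mpr ha.symm, mul_one]

lemma pow_mul_eq_zpow_mul_of_inv_eq (ha : a⁻¹ = a) (hb : b⁻¹ = b) (k : ℕ) :
    (b * a) ^ k * b = (a * b) ^ ((orderOf (a * b) : ℤ) - k - 1) * a := by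
  calc (b * a) ^ k * b = ((a * b) ^ (-1 : ℤ)) ^ (k : ℤ) * ((a * b) ^ (-1 : ℤ) * a) := by
        rw [zpow_neg_one_mul_of_inv_eq ha hb, zpow_neg_one, mul_inv_of_inv_eq ha hb, zpow_natCast]
    _ = (a * b) ^ ((orderOf (a * b) : ℤ) - k - 1) * a := by
        rw [show (orderOf (a * b) : ℤ) - k - 1 = orderOf (a * b) + (-1 * k + -1) by ring,
          zpow_add, zpow_natCast (a * b), pow_orderOf_eq_one, one_mul, ← mul_assoc, ← zpow_mul,
          ← zpow_add]

lemma dihedralRefl_eq_zpow_mul (ha : a⁻¹ = a) (hb : b⁻¹ = b) (x : ℕ ⊕ ℕ) :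
    dihedralRefl a b x = (a * b) ^ dihedralIndex (orderOf (a * b)) x * a := by
  cases x with
  | inl i => simp [dihedralRefl, dihedralIndex]
  | inr k => exact pow_mul_eq_zpow_mul_of_inv_eq ha hb k

end InvolutionPair

lemma DihedralBefore.index_cases {m : ℕ} {x y : ℕ ⊕ ℕ} (h : DihedralBefore m x y) :
    (0 ≤ dihedralIndex m x ∧ dihedralIndex m x < dihedralIndex m y ∧
        (m = 0 ∨ dihedralIndex m y < m)) ∨
      (m = 0 ∧ dihedralIndex m y < 0 ∧ dihedralIndex m x < dihedralIndex m y) ∨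
      (m = 0 ∧ dihedralIndex m y < 0 ∧ 0 ≤ dihedralIndex m x) := by
  cases x <;> cases y <;> simp only [DihedralBefore, dihedralIndex] at h ⊢ <;> omega

section DihedralFrame

variable {V : Type*} [AddCommGroup V] [Module ℝ V]

/-- Up to a nonzero factor, the root of the reflection `(σ₁ σ₂) ^ n * σ₁` of a `DihedralFrame`. -/
noncomputable def rootSeq (s : ℝ) (f₁ f₂ : V) (n : ℤ) : V :=
  (S ℝ n).eval s • f₁ + (S ℝ (n - 1)).eval s • f₂

/-- `σ₁, σ₂` act on `f₁, f₂` as the simple reflections of the Cartan matrix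
`[[2, -s], [-s, 2]]`. -/
structure DihedralFrame (σ₁ σ₂ : V ≃ₗ[ℝ] V) (s : ℝ) (f₁ f₂ : V) : Prop where
  apply₁₁ : σ₁ f₁ = -f₁
  apply₁₂ : σ₁ f₂ = f₂ + s • f₁
  apply₂₁ : σ₂ f₁ = f₁ + s • f₂
  apply₂₂ : σ₂ f₂ = -f₂

variable {σ₁ σ₂ : V ≃ₗ[ℝ] V} {s : ℝ} {f₁ f₂ : V}

@[simp] lemma rootSeq_zero : rootSeq s f₁ f₂ 0 = f₁ := by simp [rootSeq]

@[simp] lemma rootSeq_neg_one : rootSeq s f₁ f₂ (-1) = -f₂ := by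
  simp [rootSeq, show (-1 : ℤ) - 1 = -2 by norm_num]

lemma DihedralFrame.mul_apply_rootSeq (h : DihedralFrame σ₁ σ₂ s f₁ f₂) (n : ℤ) :
    (σ₁ * σ₂) (rootSeq s f₁ f₂ n) = rootSeq s f₁ f₂ (n + 2) := by
  have h₁ : (S ℝ (n + 1)).eval s = s * (S ℝ n).eval s - (S ℝ (n - 1)).eval s := by
    simp [S_add_one]
  have h₂ : (S ℝ (n + 2)).eval s = s * (S ℝ (n + 1)).eval s - (S ℝ n).eval s := by
    simp [S_add_two]
  simp only [rootSeq, LinearEquiv.mul_apply, map_add, map_smul, map_neg, h.apply₁₁, h.apply₁₂,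
    h.apply₂₁, h.apply₂₂, show n + 2 - 1 = n + 1 by ring, h₂, h₁]
  module

lemma DihedralFrame.zpow_apply_rootSeq (h : DihedralFrame σ₁ σ₂ s f₁ f₂) (j n : ℤ) :
    ((σ₁ * σ₂) ^ j) (rootSeq s f₁ f₂ n) = rootSeq s f₁ f₂ (n + 2 * j) := by
  induction j using Int.induction_on generalizing n with
  | zero => simp
  | succ j ih =>
    rw [zpow_add_one, LinearEquiv.mul_apply, h.mul_apply_rootSeq, ih]
    ring_nf
  | pred j ih =>
    have e : rootSeq s f₁ f₂ n = (σ₁ * σ₂) (rootSeq s f₁ f₂ (n - 2)) := by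
      rw [h.mul_apply_rootSeq, sub_add_cancel]
    rw [zpow_sub_one, LinearEquiv.mul_apply, e, LinearEquiv.coe_inv,
      LinearEquiv.symm_apply_apply, ih]
    ring_nf

lemma sub_swap_add_smul (F : V →ₗ[ℝ] V →ₗ[ℝ] ℝ) (u v : V) (p q p' q' : ℝ) :
    F (p • u + q • v) (p' • u + q' • v) - F (p' • u + q' • v) (p • u + q • v) =
      (p * q' - q * p') * (F u v - F v u) := by
  simp only [map_add, map_smul, LinearMap.add_apply, LinearMap.smul_apply, smul_eq_mul]
  ring

lemma sub_swap_smul_smul (F : V →ₗ[ℝ] V →ₗ[ℝ] ℝ) (c₁ c₂ : ℝ) (u v : V) :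
    F (c₁ • u) (c₂ • v) - F (c₂ • v) (c₁ • u) = c₁ * c₂ * (F u v - F v u) := by
  simp only [map_smul, LinearMap.smul_apply, smul_eq_mul]
  ring

lemma sub_swap_rootSeq (F : V →ₗ[ℝ] V →ₗ[ℝ] ℝ) (a b : ℤ) :
    F (rootSeq s f₁ f₂ a) (rootSeq s f₁ f₂ b) - F (rootSeq s f₁ f₂ b) (rootSeq s f₁ f₂ a) =
      (S ℝ (b - a - 1)).eval s * (F f₁ f₂ - F f₂ f₁) := by
  rw [rootSeq, rootSeq, sub_swap_add_smul, ← S_mul_S_sub_S_mul_S]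
  simp

end DihedralFrame

/-- `c • rootSeq s f₁ f₂ n` is nonzero with nonnegative coordinates in `f₁, f₂`. -/
def IsPosRootCoeff (s : ℝ) (n : ℤ) (c : ℝ) : Prop :=
  c ≠ 0 ∧ 0 ≤ c * (S ℝ n).eval s ∧ 0 ≤ c * (S ℝ (n - 1)).eval s

namespace IsPosRootCoeff

variable {s : ℝ} {m : ℕ} {n : ℤ} {c : ℝ}

lemma pos (hS : ∀ e : ℤ, 0 ≤ e → (m = 0 ∨ e + 1 < m) → 0 < (S ℝ e).eval s)
    (hc : IsPosRootCoeff s n c) (hn : 0 ≤ n) (hnm : m = 0 ∨ n < m) : 0 < c := by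
  refine lt_of_le_of_ne ?_ (Ne.symm hc.1)
  rcases hn.eq_or_lt with rfl | hn
  · simpa using hc.2.1
  · exact nonneg_of_mul_nonneg_left hc.2.2 (hS (n - 1) (by omega) (by omega))

lemma neg (hS : ∀ e : ℤ, 0 ≤ e → (m = 0 ∨ e + 1 < m) → 0 < (S ℝ e).eval s)
    (hc : IsPosRootCoeff s n c) (hm : m = 0) (hn : n < 0) : c < 0 := by
  have h := hc.2.2
  rw [show n - 1 = -(-n - 1) - 2 by ring, S_neg_sub_two, Polynomial.eval_neg, mul_neg,
    neg_nonneg] at h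
  exact lt_of_le_of_ne (nonpos_of_mul_nonpos_left h (hS (-n - 1) (by omega) (Or.inl hm))) hc.1

end IsPosRootCoeff

lemma pos_mul_mul_of_dihedralBefore {s : ℝ} {m : ℕ}
    (hS : ∀ e : ℤ, 0 ≤ e → (m = 0 ∨ e + 1 < m) → 0 < (S ℝ e).eval s) {x y : ℕ ⊕ ℕ}
    (h : DihedralBefore m x y) {c₁ c₂ : ℝ} (h₁ : IsPosRootCoeff s (dihedralIndex m x) c₁)
    (h₂ : IsPosRootCoeff s (dihedralIndex m y) c₂) :
    0 < c₁ * c₂ * (S ℝ (dihedralIndex m y - dihedralIndex m x - 1)).eval s := by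
  set a := dihedralIndex m x
  set b := dihedralIndex m y
  rcases h.index_cases with ⟨ha, hab, hb⟩ | ⟨hm, hb, hab⟩ | ⟨hm, hb, ha⟩
  · exact mul_pos (mul_pos (h₁.pos hS ha (by omega)) (h₂.pos hS (by omega) hb))
      (hS _ (by omega) (by omega))
  · exact mul_pos (mul_pos_of_neg_of_neg (h₁.neg hS hm (by omega)) (h₂.neg hS hm hb))
      (hS _ (by omega) (Or.inl hm))
  · rw [show b - a - 1 = -(a - b - 1) - 2 by ring, S_neg_sub_two, Polynomial.eval_neg, mul_neg,
      ← neg_mul, ← mul_neg]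
    exact mul_pos (mul_pos (h₁.pos hS ha (Or.inl hm)) (neg_pos.mpr (h₂.neg hS hm hb)))
      (hS _ (by omega) (Or.inl hm))

lemma CoxeterSystem.isReflection_zpow_mul {B W : Type*} [Group W] {M : CoxeterMatrix B}
    (cs : CoxeterSystem M W) {r₁ r₂ : W} (h₁ : cs.IsReflection r₁) (h₂ : cs.IsReflection r₂)
    (n : ℤ) : cs.IsReflection ((r₁ * r₂) ^ n * r₁) := by
  obtain ⟨n₀, j, h₀, rfl⟩ := Int.exists_eq_add_two_mul n
  rw [zpow_add_two_mul_mul h₁.inv h₂.inv]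
  refine IsReflection.conj ?_ _
  rcases h₀ with rfl | rfl
  · simpa using h₁
  · rwa [zpow_neg_one_mul_of_inv_eq h₁.inv h₂.inv]

namespace CoxeterGeomRep

variable {B W V : Type*} [Group W] [AddCommGroup V] [Module ℝ V] {M : CoxeterMatrix B}
  {cs : CoxeterSystem M W} (g : CoxeterGeomRep M cs V)

lemma exists_beta_conj_simple (w : W) (i : B) :
    ∃ ε : ℝ, ε ≠ 0 ∧ g.β (w * cs.simple i * w⁻¹) = ε • g.ρ w (g.α i) := by
  rcases g.β_root w i with h | h
  · exact ⟨1, one_ne_zero, by rw [h, one_smul]⟩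
  · exact ⟨-1, by norm_num, by rw [h, neg_one_smul]⟩

lemma beta_ne_zero {t : W} (ht : cs.IsReflection t) : g.β t ≠ 0 := by
  obtain ⟨w, i, rfl⟩ := ht
  obtain ⟨ε, hε, h⟩ := g.exists_beta_conj_simple w i
  rw [h]
  exact smul_ne_zero hε ((g.ρ w).map_ne_zero_iff.mpr (g.α.ne_zero i))

lemma exists_beta_conj {t : W} (ht : cs.IsReflection t) (w : W) :
    ∃ ε : ℝ, ε ≠ 0 ∧ g.β (w * t * w⁻¹) = ε • g.ρ w (g.β t) := by
  obtain ⟨u, i, rfl⟩ := ht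
  obtain ⟨ε₁, hε₁, h₁⟩ := g.exists_beta_conj_simple u i
  obtain ⟨ε₂, hε₂, h₂⟩ := g.exists_beta_conj_simple (w * u) i
  refine ⟨ε₂ * ε₁⁻¹, mul_ne_zero hε₂ (inv_ne_zero hε₁), ?_⟩
  rw [show w * (u * cs.simple i * u⁻¹) * w⁻¹ = (w * u) * cs.simple i * (w * u)⁻¹ by group, h₂,
    h₁, map_smul, smul_smul, mul_assoc, inv_mul_cancel₀ hε₁, mul_one, map_mul,
    LinearEquiv.mul_apply]

lemma exists_rho_simple_eq (i : B) :
    ∃ φ : V →ₗ[ℝ] ℝ, φ (g.α i) = 2 ∧ ∀ v, g.ρ (cs.simple i) v = v - φ v • g.α i := by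
  let φ : V →ₗ[ℝ] ℝ := (Finsupp.linearCombination ℝ (g.a i)).comp g.α.repr.toLinearMap
  have hφ : ∀ j, φ (g.α j) = g.a i j := by simp [φ]
  refine ⟨φ, by rw [hφ, g.a_diag], fun v => ?_⟩
  have h : (g.ρ (cs.simple i)).toLinearMap = LinearMap.id - φ.smulRight (g.α i) :=
    g.α.ext fun j => by simp [g.act, hφ]
  simpa using LinearMap.congr_fun h v

lemma exists_rho_eq_sub_smul {t : W} (ht : cs.IsReflection t) :
    ∃ φ : V →ₗ[ℝ] ℝ, φ (g.β t) = 2 ∧ ∀ v, g.ρ t v = v - φ v • g.β t := by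
  obtain ⟨w, i, rfl⟩ := ht
  obtain ⟨ψ, hψ, hρ⟩ := g.exists_rho_simple_eq i
  obtain ⟨ε, hε, hβ⟩ := g.exists_beta_conj_simple w i
  refine ⟨ε⁻¹ • ψ.comp (g.ρ w).symm.toLinearMap, ?_, fun v => ?_⟩
  · simp [hβ, hψ, hε]
  · rw [map_mul, map_mul, map_inv, LinearEquiv.mul_apply, LinearEquiv.mul_apply,
      LinearEquiv.coe_inv, hρ, map_sub, LinearEquiv.apply_symm_apply, map_smul, hβ]
    simp [smul_smul, mul_comm ε⁻¹, hε]

lemma repr_beta_nonneg {t : W} (ht : cs.IsReflection t) (i : B) :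
    0 ≤ g.α.repr (g.β t) i := by
  obtain ⟨c, hc, hβ⟩ := g.β_pos t ht
  rw [hβ, ← Finsupp.linearCombination_apply, g.α.repr_linearCombination]
  exact hc i

lemma pos_of_beta_eq_smul {t t' : W} (ht : cs.IsReflection t) (ht' : cs.IsReflection t')
    {c : ℝ} (h : g.β t = c • g.β t') : 0 < c := by
  obtain ⟨i, hi⟩ : ∃ i, g.α.repr (g.β t') i ≠ 0 := by
    by_contra! h0
    exact g.beta_ne_zero ht' (g.α.repr.map_eq_zero_iff.mp (Finsupp.ext h0))
  have hc : 0 ≤ c * g.α.repr (g.β t') i := by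
    simpa [h] using g.repr_beta_nonneg ht i
  have hc0 : c ≠ 0 := by
    rintro rfl
    exact g.beta_ne_zero ht (by simp [h])
  have hi : 0 < g.α.repr (g.β t') i := lt_of_le_of_ne (g.repr_beta_nonneg ht' i) (Ne.symm hi)
  exact lt_of_le_of_ne (nonneg_of_mul_nonneg_left hc hi) (Ne.symm hc0)

end CoxeterGeomRep

namespace IsCanonicalGenerators

variable {B W V : Type*} [Group W] [AddCommGroup V] [Module ℝ V] {M : CoxeterMatrix B}
  {cs : CoxeterSystem M W} {g : CoxeterGeomRep M cs V} {W' : Subgroup W} {r₁ r₂ : W}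
  {s κ : ℝ}

lemma pair_comm (hcan : IsCanonicalGenerators cs g W' {r₁, r₂}) :
    IsCanonicalGenerators cs g W' {r₂, r₁} := by
  rwa [Set.pair_comm]

lemma mem_isReflection (hcan : IsCanonicalGenerators cs g W' {r₁, r₂}) :
    r₁ ∈ W' ∧ cs.IsReflection r₁ :=
  hcan.1 (Set.mem_insert r₁ {r₂})

lemma exists_nonneg_beta_eq_add (hcan : IsCanonicalGenerators cs g W' {r₁, r₂}) {t : W}
    (htW : t ∈ W') (ht : cs.IsReflection t) :
    ∃ p q : ℝ, 0 ≤ p ∧ 0 ≤ q ∧ g.β t = p • g.β r₁ + q • g.β r₂ := by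
  classical
  obtain ⟨n, x, c, hx, hc, hβ⟩ := hcan.2.1 t htW ht
  let I := Finset.univ.filter fun k => x k = g.β r₁
  refine ⟨∑ k ∈ I, c k, ∑ k ∈ Iᶜ, c k, Finset.sum_nonneg fun k _ => hc k,
    Finset.sum_nonneg fun k _ => hc k, ?_⟩
  rw [hβ, ← Finset.sum_add_sum_compl I, Finset.sum_smul, Finset.sum_smul]
  congr 1 <;> refine Finset.sum_congr rfl fun k hk => ?_
  · rw [(Finset.mem_filter.mp hk).2]
  · obtain ⟨r, hr, hrk⟩ := hx k
    rcases hr with rfl | rfl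
    · exact absurd hrk.symm (by simpa [I] using hk)
    · rw [← hrk]

lemma eq_of_beta_eq_smul (hcan : IsCanonicalGenerators cs g W' {r₁, r₂}) {t : W}
    (htW : t ∈ W') (ht : cs.IsReflection t) {c : ℝ} (h : g.β t = c • g.β r₁) : t = r₁ := by
  by_contra hne
  have hc := g.pos_of_beta_eq_smul ht hcan.mem_isReflection.2 h
  refine hcan.2.2 r₁ (Set.mem_insert r₁ {r₂}) ⟨1, fun _ => g.β t, fun _ => c⁻¹, ?_, ?_, ?_⟩
  · exact fun _ => ⟨t, ⟨⟨htW, ht⟩, hne⟩, rfl⟩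
  · exact fun _ => inv_nonneg.mpr hc.le
  · rw [Fin.sum_univ_one, h, smul_smul, inv_mul_cancel₀ hc.ne', one_smul]

lemma linearIndependent (hcan : IsCanonicalGenerators cs g W' {r₁, r₂}) (hr : r₁ ≠ r₂) :
    LinearIndependent ℝ ![g.β r₁, g.β r₂] := by
  obtain ⟨h₂W, h₂⟩ := hcan.pair_comm.mem_isReflection
  refine (LinearIndependent.pair_iff' (g.beta_ne_zero hcan.mem_isReflection.2)).mpr
    fun c hc => hr ?_
  exact (hcan.eq_of_beta_eq_smul h₂W h₂ hc.symm).symm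

lemma exists_rho_eq (hcan : IsCanonicalGenerators cs g W' {r₁, r₂}) (hr : r₁ ≠ r₂) :
    ∃ x : ℝ, 0 ≤ x ∧ g.ρ r₁ (g.β r₁) = -g.β r₁ ∧ g.ρ r₁ (g.β r₂) = g.β r₂ + x • g.β r₁ := by
  obtain ⟨h₁W, h₁⟩ := hcan.mem_isReflection
  obtain ⟨h₂W, h₂⟩ := hcan.pair_comm.mem_isReflection
  obtain ⟨φ, hφ, hρ⟩ := g.exists_rho_eq_sub_smul h₁
  have h₁₂ : g.ρ r₁ (g.β r₂) = g.β r₂ + (-φ (g.β r₂)) • g.β r₁ := by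
    rw [hρ, neg_smul, sub_eq_add_neg]
  refine ⟨-φ (g.β r₂), ?_, by rw [hρ, hφ]; module, h₁₂⟩
  -- `x ≥ 0`: the root of `r₁ r₂ r₁` is a multiple of `ρ r₁ β₂` lying in the cone
  obtain ⟨ε, hε, hβ⟩ := g.exists_beta_conj h₂ r₁
  rw [h₁.inv, h₁₂] at hβ
  obtain ⟨p, q, hp, hq, hpq⟩ := hcan.exists_nonneg_beta_eq_add
    (W'.mul_mem (W'.mul_mem h₁W h₂W) h₁W) (by simpa [h₁.inv] using h₂.conj r₁)
  obtain ⟨rfl, rfl⟩ := (hcan.linearIndependent hr).eq_of_pair (s' := ε * -φ (g.β r₂)) (t' := ε)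
    (hpq.symm.trans (hβ.trans (by module)))
  exact nonneg_of_mul_nonneg_right hp (lt_of_le_of_ne hq (Ne.symm hε))

lemma mul_mul_eq_of_rho_eq (hcan : IsCanonicalGenerators cs g W' {r₁, r₂})
    (h : g.ρ r₁ (g.β r₂) = g.β r₂) : r₁ * r₂ * r₁ = r₂ := by
  obtain ⟨h₁W, h₁⟩ := hcan.mem_isReflection
  obtain ⟨h₂W, h₂⟩ := hcan.pair_comm.mem_isReflection
  obtain ⟨ε, -, hβ⟩ := g.exists_beta_conj h₂ r₁
  rw [h₁.inv, h] at hβ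
  exact hcan.pair_comm.eq_of_beta_eq_smul (W'.mul_mem (W'.mul_mem h₁W h₂W) h₁W)
    (by simpa [h₁.inv] using h₂.conj r₁) hβ

lemma eq_zero_of_mul_mul_eq (hcan : IsCanonicalGenerators cs g W' {r₁, r₂}) (hr : r₁ ≠ r₂)
    (hconj : r₁ * r₂ * r₁ = r₂) {y : ℝ} (h : g.ρ r₂ (g.β r₁) = g.β r₁ + y • g.β r₂) :
    y = 0 := by
  obtain ⟨-, h₁⟩ := hcan.mem_isReflection
  have hcomm : r₂ * r₁ = r₁ * r₂ :=
    calc r₂ * r₁ = r₁ * r₂ * r₁ * r₁ := by rw [hconj]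
      _ = r₁ * r₂ := by rw [mul_assoc, h₁.mul_self, mul_one]
  obtain ⟨ε, -, hβ⟩ := g.exists_beta_conj h₁ r₂
  rw [hcomm, mul_inv_cancel_right, h] at hβ
  obtain ⟨hε, h0⟩ := (hcan.linearIndependent hr).eq_of_pair (s := 1) (t := 0) (s' := ε)
    (t' := ε * y) (by rw [one_smul, zero_smul, add_zero]; exact hβ.trans (by module))
  rw [← hε, one_mul] at h0
  exact h0.symm

lemma exists_dihedralFrame (hcan : IsCanonicalGenerators cs g W' {r₁, r₂}) (hr : r₁ ≠ r₂) :
    ∃ s κ : ℝ, 0 < κ ∧ DihedralFrame (g.ρ r₁) (g.ρ r₂) s (g.β r₁) (κ • g.β r₂) := by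
  obtain ⟨x, hx, h₁₁, h₁₂⟩ := hcan.exists_rho_eq hr
  obtain ⟨y, hy, h₂₂, h₂₁⟩ := hcan.pair_comm.exists_rho_eq hr.symm
  have hxy : x = 0 ↔ y = 0 := by
    constructor <;> rintro rfl
    · exact hcan.eq_zero_of_mul_mul_eq hr (hcan.mul_mul_eq_of_rho_eq (by simp [h₁₂])) h₂₁
    · exact hcan.pair_comm.eq_zero_of_mul_mul_eq hr.symm
        (hcan.pair_comm.mul_mul_eq_of_rho_eq (by simp [h₂₁])) h₁₂
  -- rescaling `β r₂` by `κ` with `κ² x = y` makes the Cartan matrix symmetric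
  obtain ⟨κ, hκ, hκxy⟩ := exists_pos_sq_mul_eq hx hy hxy
  refine ⟨κ * x, κ, hκ, ⟨h₁₁, ?_, ?_, ?_⟩⟩
  · rw [map_smul, h₁₂]; module
  · rw [h₂₁, ← hκxy]; module
  · rw [map_smul, h₂₂]; module

lemma zpow_mul_mem (hcan : IsCanonicalGenerators cs g W' {r₁, r₂}) (n : ℤ) :
    (r₁ * r₂) ^ n * r₁ ∈ W' :=
  W'.mul_mem (W'.zpow_mem (W'.mul_mem hcan.mem_isReflection.1
    hcan.pair_comm.mem_isReflection.1) n) hcan.mem_isReflection.1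

lemma exists_beta_zpow_mul_eq_smul (hcan : IsCanonicalGenerators cs g W' {r₁, r₂})
    (hκ : κ ≠ 0) (hF : DihedralFrame (g.ρ r₁) (g.ρ r₂) s (g.β r₁) (κ • g.β r₂)) (n : ℤ) :
    ∃ c : ℝ, c ≠ 0 ∧ g.β ((r₁ * r₂) ^ n * r₁) = c • rootSeq s (g.β r₁) (κ • g.β r₂) n := by
  obtain ⟨-, h₁⟩ := hcan.mem_isReflection
  obtain ⟨-, h₂⟩ := hcan.pair_comm.mem_isReflection
  obtain ⟨n₀, j, h₀, rfl⟩ := Int.exists_eq_add_two_mul n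
  obtain ⟨c, hc, hβ⟩ : ∃ c : ℝ, c ≠ 0 ∧
      g.β ((r₁ * r₂) ^ n₀ * r₁) = c • rootSeq s (g.β r₁) (κ • g.β r₂) n₀ := by
    rcases h₀ with rfl | rfl
    · exact ⟨1, one_ne_zero, by simp⟩
    · refine ⟨-κ⁻¹, by simpa using hκ, ?_⟩
      rw [zpow_neg_one_mul_of_inv_eq h₁.inv h₂.inv, rootSeq_neg_one, smul_neg, neg_smul,
        neg_neg, smul_smul, inv_mul_cancel₀ hκ, one_smul]
  obtain ⟨ε, hε, hβ'⟩ := g.exists_beta_conj (cs.isReflection_zpow_mul h₁ h₂ n₀) ((r₁ * r₂) ^ j)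
  refine ⟨ε * c, mul_ne_zero hε hc, ?_⟩
  rw [zpow_add_two_mul_mul h₁.inv h₂.inv, hβ', hβ, map_smul, map_zpow, map_mul,
    hF.zpow_apply_rootSeq, smul_smul]

lemma isPosRootCoeff_of_beta_eq_smul (hcan : IsCanonicalGenerators cs g W' {r₁, r₂})
    (hr : r₁ ≠ r₂) (hκ : 0 < κ) {n : ℤ} {c : ℝ} (hc : c ≠ 0)
    (h : g.β ((r₁ * r₂) ^ n * r₁) = c • rootSeq s (g.β r₁) (κ • g.β r₂) n) :
    IsPosRootCoeff s n c := by
  obtain ⟨-, h₁⟩ := hcan.mem_isReflection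
  obtain ⟨-, h₂⟩ := hcan.pair_comm.mem_isReflection
  obtain ⟨p, q, hp, hq, hpq⟩ :=
    hcan.exists_nonneg_beta_eq_add (hcan.zpow_mul_mem n) (cs.isReflection_zpow_mul h₁ h₂ n)
  rw [h, rootSeq] at hpq
  obtain ⟨rfl, rfl⟩ := (hcan.linearIndependent hr).eq_of_pair
    (s := c * (S ℝ n).eval s) (t := c * (S ℝ (n - 1)).eval s * κ) (by rw [← hpq]; module)
  exact ⟨hc, hp, nonneg_of_mul_nonneg_left hq hκ⟩

lemma eval_S_pos (hcan : IsCanonicalGenerators cs g W' {r₁, r₂}) (hr : r₁ ≠ r₂) (hκ : 0 < κ)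
    (hF : DihedralFrame (g.ρ r₁) (g.ρ r₂) s (g.β r₁) (κ • g.β r₂)) (e : ℤ) (he₀ : 0 ≤ e)
    (he : orderOf (r₁ * r₂) = 0 ∨ e + 1 < orderOf (r₁ * r₂)) : 0 < (S ℝ e).eval s := by
  lift e to ℕ using he₀
  induction e with
  | zero => simp
  | succ e ih =>
    have hS := ih (he.imp_right (by omega))
    obtain ⟨c, hc, hβ⟩ := hcan.exists_beta_zpow_mul_eq_smul hκ.ne' hF (e + 1 : ℕ)
    obtain ⟨-, h₁, h₂⟩ := hcan.isPosRootCoeff_of_beta_eq_smul hr hκ hc hβ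
    push_cast at h₁ h₂ hβ ⊢
    rw [add_sub_cancel_right] at h₂
    have hcpos : 0 < c := lt_of_le_of_ne (nonneg_of_mul_nonneg_left h₂ hS) (Ne.symm hc)
    by_contra! hle
    have h0 : (S ℝ (e + 1)).eval s = 0 := le_antisymm hle (nonneg_of_mul_nonneg_right h₁ hcpos)
    -- the root of `(r₁ r₂)^(e+1) r₁` is then a multiple of `β r₂`, so this reflection is `r₂`
    have ht : (r₁ * r₂) ^ (e + 1 : ℤ) * r₁ = r₂ :=
      hcan.pair_comm.eq_of_beta_eq_smul (hcan.zpow_mul_mem _)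
        (cs.isReflection_zpow_mul hcan.mem_isReflection.2 hcan.pair_comm.mem_isReflection.2 _)
        (c := c * (S ℝ e).eval s * κ) (by rw [hβ, rootSeq, h0, add_sub_cancel_right]; module)
    have hpow : (r₁ * r₂) ^ (e + 2) = 1 := by
      rw [pow_succ, ← zpow_natCast, Nat.cast_succ, ← mul_assoc, ht,
        hcan.pair_comm.mem_isReflection.2.mul_self]
    rcases he with h | h
    · exact orderOf_eq_zero_iff'.mp h (e + 2) (by omega) hpow
    · exact pow_ne_one_of_lt_orderOf (by omega) (by omega) hpow

lemma exists_sub_swap_eq_mul (hcan : IsCanonicalGenerators cs g W' {r₁, r₂}) (hr : r₁ ≠ r₂)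
    (F : V →ₗ[ℝ] V →ₗ[ℝ] ℝ) (x y : ℕ ⊕ ℕ) :
    ∃ c : ℝ, F (g.β (dihedralRefl r₁ r₂ x)) (g.β (dihedralRefl r₁ r₂ y)) -
        F (g.β (dihedralRefl r₁ r₂ y)) (g.β (dihedralRefl r₁ r₂ x)) =
          c * (F (g.β r₁) (g.β r₂) - F (g.β r₂) (g.β r₁)) ∧
      (DihedralBefore (orderOf (r₁ * r₂)) x y → 0 < c) := by
  obtain ⟨-, h₁⟩ := hcan.mem_isReflection
  obtain ⟨-, h₂⟩ := hcan.pair_comm.mem_isReflection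
  obtain ⟨s, κ, hκ, hF⟩ := hcan.exists_dihedralFrame hr
  rw [dihedralRefl_eq_zpow_mul h₁.inv h₂.inv, dihedralRefl_eq_zpow_mul h₁.inv h₂.inv]
  set a := dihedralIndex (orderOf (r₁ * r₂)) x
  set b := dihedralIndex (orderOf (r₁ * r₂)) y
  obtain ⟨c₁, hc₁, hβ₁⟩ := hcan.exists_beta_zpow_mul_eq_smul hκ.ne' hF a
  obtain ⟨c₂, hc₂, hβ₂⟩ := hcan.exists_beta_zpow_mul_eq_smul hκ.ne' hF b
  refine ⟨c₁ * c₂ * (S ℝ (b - a - 1)).eval s * κ, ?_, fun h => mul_pos ?_ hκ⟩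
  · rw [hβ₁, hβ₂, sub_swap_smul_smul, sub_swap_rootSeq]
    simp only [map_smul, LinearMap.smul_apply, smul_eq_mul]
    ring
  · exact pos_mul_mul_of_dihedralBefore (hcan.eval_S_pos hr hκ hF) h
      (hcan.isPosRootCoeff_of_beta_eq_smul hr hκ hc₁ hβ₁)
      (hcan.isPosRootCoeff_of_beta_eq_smul hr hκ hc₂ hβ₂)

end IsCanonicalGenerators

theorem omega_cyclic_general
    {B W V : Type*} [Group W] [AddCommGroup V] [Module ℝ V]
    {M : CoxeterMatrix B} (cs : CoxeterSystem M W) (g : CoxeterGeomRep M cs V)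
    (F : V →ₗ[ℝ] V →ₗ[ℝ] ℝ)
    (W' : Subgroup W)
    (r₁ r₂ : W) (hr : r₁ ≠ r₂)
    (hcan : IsCanonicalGenerators cs g W' {r₁, r₂}) :
    (F (g.β r₁) (g.β r₂) - F (g.β r₂) (g.β r₁) = 0 →
      ∀ x y : ℕ ⊕ ℕ, DihedralIdx (orderOf (r₁ * r₂)) x →
        DihedralIdx (orderOf (r₁ * r₂)) y →
        F (g.β (dihedralRefl r₁ r₂ x)) (g.β (dihedralRefl r₁ r₂ y)) -
          F (g.β (dihedralRefl r₁ r₂ y)) (g.β (dihedralRefl r₁ r₂ x)) = 0) ∧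
    (F (g.β r₁) (g.β r₂) - F (g.β r₂) (g.β r₁) < 0 →
      ∀ x y : ℕ ⊕ ℕ, DihedralBefore (orderOf (r₁ * r₂)) x y →
        F (g.β (dihedralRefl r₁ r₂ x)) (g.β (dihedralRefl r₁ r₂ y)) -
          F (g.β (dihedralRefl r₁ r₂ y)) (g.β (dihedralRefl r₁ r₂ x)) < 0) ∧
    (0 < F (g.β r₁) (g.β r₂) - F (g.β r₂) (g.β r₁) →
      ∀ x y : ℕ ⊕ ℕ, DihedralBefore (orderOf (r₁ * r₂)) x y →
        0 < F (g.β (dihedralRefl r₁ r₂ x)) (g.β (dihedralRefl r₁ r₂ y)) -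
          F (g.β (dihedralRefl r₁ r₂ y)) (g.β (dihedralRefl r₁ r₂ x))) := by
  refine ⟨fun h x y _ _ => ?_, fun h x y hxy => ?_, fun h x y hxy => ?_⟩ <;>
    obtain ⟨c, hc, hpos⟩ := hcan.exists_sub_swap_eq_mul hr F x y <;> rw [hc]
  · rw [h, mul_zero]
  · exact mul_neg_of_pos_of_neg (hpos hxy) h
  · exact mul_pos (hpos hxy) h

/-- Let `W'` be a generalized rank two parabolic subgroup with canonical
generators `r₁, r₂`, whose reflections are ordered `u₁ = r₁, u₂ = r₁r₂r₁, …, u_m = r₂`,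
and let `ω_c` be the antisymmetrized Euler form.  If `ω_c(β_{u₁}, β_{u_m}) = 0` then
`ω_c(β_{u_i}, β_{u_j}) = 0` for all `i, j`; if `ω_c(β_{u₁}, β_{u_m}) < 0` then
`ω_c(β_{u_i}, β_{u_j}) < 0` for all `i < j`; and if `ω_c(β_{u₁}, β_{u_m}) > 0` then
`ω_c(β_{u_i}, β_{u_j}) > 0` for all `i < j`. -/
theorem omega_cyclic
    {B W V : Type*} [Group W] [AddCommGroup V] [Module ℝ V]
    {M : CoxeterMatrix B} (cs : CoxeterSystem M W) (g : CoxeterGeomRep M cs V)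
    (l : List B) (hnd : l.Nodup) (hall : ∀ b : B, b ∈ l)
    (F : V →ₗ[ℝ] V →ₗ[ℝ] ℝ) (hF : IsEulerForm cs g l F)
    (W' : Subgroup W)
    (hW' : ∃ t₁ t₂ : W, cs.IsReflection t₁ ∧ cs.IsReflection t₂ ∧ t₁ ≠ t₂ ∧
      W' = Subgroup.closure
        {t | cs.IsReflection t ∧ g.β t ∈ Submodule.span ℝ {g.β t₁, g.β t₂}})
    (r₁ r₂ : W) (hr : r₁ ≠ r₂)
    (hcan : IsCanonicalGenerators cs g W' {r₁, r₂}) :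
    (F (g.β r₁) (g.β r₂) - F (g.β r₂) (g.β r₁) = 0 →
      ∀ x y : ℕ ⊕ ℕ, DihedralIdx (orderOf (r₁ * r₂)) x →
        DihedralIdx (orderOf (r₁ * r₂)) y →
        F (g.β (dihedralRefl r₁ r₂ x)) (g.β (dihedralRefl r₁ r₂ y)) -
          F (g.β (dihedralRefl r₁ r₂ y)) (g.β (dihedralRefl r₁ r₂ x)) = 0) ∧
    (F (g.β r₁) (g.β r₂) - F (g.β r₂) (g.β r₁) < 0 →
      ∀ x y : ℕ ⊕ ℕ, DihedralBefore (orderOf (r₁ * r₂)) x y →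
        F (g.β (dihedralRefl r₁ r₂ x)) (g.β (dihedralRefl r₁ r₂ y)) -
          F (g.β (dihedralRefl r₁ r₂ y)) (g.β (dihedralRefl r₁ r₂ x)) < 0) ∧
    (0 < F (g.β r₁) (g.β r₂) - F (g.β r₂) (g.β r₁) →
      ∀ x y : ℕ ⊕ ℕ, DihedralBefore (orderOf (r₁ * r₂)) x y →
        0 < F (g.β (dihedralRefl r₁ r₂ x)) (g.β (dihedralRefl r₁ r₂ y)) -
          F (g.β (dihedralRefl r₁ r₂ y)) (g.β (dihedralRefl r₁ r₂ x))) :=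
  omega_cyclic_general cs g F W' r₁ r₂ hr hcan
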